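/- arXiv:2110.08372 — 3 statements merged into one kernel-verified Lean document; each statement's English description precedes it below -/
import Mathlib

section
/- Let γ : ℝ → ℝ be 1-periodic, bounded, with nonzero mean ⟨γ⟩, and Γ(t) = ∫₀ᵗ γ(s) ds. Then for each n ∈ ℤ, the preimage Γ⁻¹([n, n+1)) has Lebesgue measure at most (1 + 4‖γ‖_{L^∞})/|⟨γ⟩|. -/
/-!
Write `b - a = m T + r` with `m = ⌊(b - a) / T⌋` and `0 ≤ r < T`. By periodicity the integral of
`γ` over `[a, b]` is `m` times its integral `c` over a period, up to an error of size at most `M T`,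
and `|c| ≤ M T` as well. Hence `Γ` grows at least linearly with slope `|c| / T`, up to a bounded
error, so a set on which `Γ` varies by less than `1` has bounded diameter.
-/

open MeasureTheory intervalIntegral

theorem abs_intervalIntegral_le_of_ae_abs_le {γ : ℝ → ℝ} {M : ℝ} (hM : ∀ᵐ t, |γ t| ≤ M)
    (a b : ℝ) : |∫ s in a..b, γ s| ≤ M * |b - a| := by
  simpa only [Real.norm_eq_abs] using
    norm_integral_le_of_norm_le_const_ae (f := γ) (hM.mono fun _ ht _ => ht)

theorem Function.Periodic.sub_mul_abs_intervalIntegral_le {γ : ℝ → ℝ} {T M : ℝ}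
    (hγ : Function.Periodic γ T) (hT : 0 < T)
    (hint : ∀ a b : ℝ, IntervalIntegrable γ volume a b) (hM : ∀ᵐ t, |γ t| ≤ M)
    {a b : ℝ} (hab : a ≤ b) :
    (b - a) * |∫ s in (0 : ℝ)..T, γ s| ≤ T * (|∫ s in a..b, γ s| + 2 * M * T) := by
  set c := ∫ s in (0 : ℝ)..T, γ s
  set m := ⌊(b - a) / T⌋
  have hm_nonneg : (0 : ℝ) ≤ m := by exact_mod_cast Int.floor_nonneg.2 (by positivity)
  have hm_le : m * T ≤ b - a := (le_div_iff₀ hT).1 (Int.floor_le _)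
  have hlt_m : b - a < (m + 1) * T := (div_lt_iff₀ hT).1 (Int.lt_floor_add_one _)
  have hperiods : ∫ s in a..a + m * T, γ s = m * c := by
    simpa [zsmul_eq_mul, hγ.intervalIntegral_add_eq a 0] using
      hγ.intervalIntegral_add_zsmul_eq m a hint
  have hsplit : ∫ s in a..b, γ s = m * c + ∫ s in a + m * T..b, γ s := by
    rw [← integral_add_adjacent_intervals (hint a (a + m * T)) (hint _ b), hperiods]
  have hrest : |∫ s in a + m * T..b, γ s| ≤ M * T := by
    refine (abs_intervalIntegral_le_of_ae_abs_le hM _ _).trans ?_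
    have hM_nonneg : 0 ≤ M := (abs_nonneg _).trans hM.exists.choose_spec
    rw [abs_of_nonneg (by linarith)]
    exact mul_le_mul_of_nonneg_left (by linarith) hM_nonneg
  have hc : |c| ≤ M * T := by
    simpa [abs_of_pos hT] using abs_intervalIntegral_le_of_ae_abs_le hM 0 T
  have hmc : m * |c| ≤ |∫ s in a..b, γ s| + M * T := by
    have hmc_eq : m * c = (∫ s in a..b, γ s) - ∫ s in a + m * T..b, γ s := by linarith
    calc m * |c| = |(∫ s in a..b, γ s) - ∫ s in a + m * T..b, γ s| := by
          rw [← hmc_eq, abs_mul, abs_of_nonneg hm_nonneg]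
      _ ≤ |∫ s in a..b, γ s| + |∫ s in a + m * T..b, γ s| := abs_sub _ _
      _ ≤ |∫ s in a..b, γ s| + M * T := by gcongr
  calc (b - a) * |c| ≤ (m + 1) * T * |c| := by gcongr
    _ = T * (m * |c| + |c|) := by ring
    _ ≤ T * (|∫ s in a..b, γ s| + 2 * M * T) :=
      mul_le_mul_of_nonneg_left (by linarith) hT.le

theorem Real.volume_le_ofReal_of_sub_le {s : Set ℝ} {D : ℝ}
    (h : ∀ x ∈ s, ∀ y ∈ s, x ≤ y → y - x ≤ D) : volume s ≤ ENNReal.ofReal D := by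
  refine (Real.volume_le_diam s).trans (Metric.ediam_le_of_forall_dist_le fun x hx y hy => ?_)
  rw [Real.dist_eq]
  rcases le_total x y with hxy | hyx
  · rw [abs_sub_comm, abs_of_nonneg (sub_nonneg.2 hxy)]
    exact h x hx y hy hxy
  · rw [abs_of_nonneg (sub_nonneg.2 hyx)]
    exact h y hy x hx hyx

/-- For `γ` 1-periodic, bounded, locally integrable, with nonzero mean, the preimage
`Γ⁻¹([n, n+1))` has Lebesgue measure at most `(1 + 4M)/|⟨γ⟩|`. -/
theorem stmt2 (γ : ℝ → ℝ) (M : ℝ)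
    (hper : ∀ t : ℝ, γ (t + 1) = γ t)
    (hint : ∀ a b : ℝ, IntervalIntegrable γ volume a b)
    (hbound : ∀ᵐ t : ℝ, |γ t| ≤ M)
    (hmean : (∫ s in (0:ℝ)..1, γ s) ≠ 0) :
    ∀ n : ℤ,
      volume {t : ℝ | (n : ℝ) ≤ (∫ s in (0:ℝ)..t, γ s) ∧ (∫ s in (0:ℝ)..t, γ s) < (n : ℝ) + 1}
        ≤ ENNReal.ofReal ((1 + 4 * M) / |∫ s in (0:ℝ)..1, γ s|) := by
  intro n
  have hM : 0 ≤ M := (abs_nonneg _).trans hbound.exists.choose_spec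
  refine Real.volume_le_ofReal_of_sub_le fun t₁ ⟨h₁, h₁'⟩ t₂ ⟨h₂, h₂'⟩ h₁₂ => ?_
  have hvar : |∫ s in t₁..t₂, γ s| < 1 := by
    rw [← integral_interval_sub_left (hint 0 t₂) (hint 0 t₁), abs_sub_lt_iff]
    constructor <;> linarith
  have hgrowth := Function.Periodic.sub_mul_abs_intervalIntegral_le hper one_pos hint hbound h₁₂
  rw [le_div_iff₀ (abs_pos.2 hmean)]
  linarith
end

section
/- Suppose positive reals m, k, p, and constants m_R, k_R, p_R > 0 and γ_+ > 0 satisfy: (i) the Gagliardo–Nirenberg bound p ≤ C₀ √m · k^{3/2} with C₀ = p_R/(√m_R · k_R^{3/2}); (ii) m · ((γ_+/2)k − p/4) ≤ (1−δ) m_R · (γ_+/6) k_R for some δ ∈ (0,1); and (iii) γ_+ k_R / 3 = p_R / 4. Then setting y = √(m k)/√(m_R k_R), one has 1 − δ ≥ 3y² − 2y³. -/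
/-!
Write `a = √(mk)` and `b = √(m_R k_R)`. Since `√m · k^{3/2} = a k`, multiplying the
Gagliardo–Nirenberg bound by `m` and inserting the Pohozaev relation `p_R = 4γ₊k_R/3` gives
`m p ≤ (4γ₊/3) a³/b`. The mass-energy bound then becomes `(γ₊/2) a² - (γ₊/3) a³/b ≤
(1-δ)(γ₊/6) b²`, which is `3y² - 2y³ ≤ 1 - δ` after dividing by `γ₊ b²/6`.
-/

theorem Real.sqrt_mul_rpow_three_halves {x y : ℝ} (hx : 0 ≤ x) (hy : 0 ≤ y) :
    √x * y ^ ((3 : ℝ) / 2) = √(x * y) * y := by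
  rw [show (3 : ℝ) / 2 = 1 / 2 + 1 by norm_num, Real.rpow_add' hy (by norm_num),
    Real.rpow_one, ← Real.sqrt_eq_rpow, Real.sqrt_mul hx]
  ring

theorem three_mul_sq_sub_two_mul_cube_div_le {γ a b c : ℝ} (hγ : 0 < γ) (hb : 0 < b)
    (h : γ / 2 * a ^ 2 - γ / 3 * a ^ 3 / b ≤ c * (γ / 6 * b ^ 2)) :
    3 * (a / b) ^ 2 - 2 * (a / b) ^ 3 ≤ c := by
  have hscale : γ / 2 * a ^ 2 - γ / 3 * a ^ 3 / b
      = γ / 6 * b ^ 2 * (3 * (a / b) ^ 2 - 2 * (a / b) ^ 3) := by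
    field_simp
    ring
  rw [hscale, mul_comm c] at h
  exact le_of_mul_le_mul_left h (by positivity)

theorem stmt14_general (γplus m k p mR kR pR δ : ℝ)
    (hγ : 0 < γplus) (hm : 0 < m) (hk : 0 < k)
    (hmR : 0 < mR) (hkR : 0 < kR)
    (hGN : p ≤ (pR / (Real.sqrt mR * kR ^ ((3:ℝ)/2))) * Real.sqrt m * k ^ ((3:ℝ)/2))
    (hME : m * ((γplus / 2) * k - p / 4) ≤ (1 - δ) * (mR * ((γplus / 6) * kR)))
    (hPoh : γplus * kR / 3 = pR / 4) :
    1 - δ ≥ 3 * (Real.sqrt (m * k) / Real.sqrt (mR * kR)) ^ 2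
      - 2 * (Real.sqrt (m * k) / Real.sqrt (mR * kR)) ^ 3 := by
  rw [mul_assoc _ (Real.sqrt m), Real.sqrt_mul_rpow_three_halves hm.le hk.le,
    Real.sqrt_mul_rpow_three_halves hmR.le hkR.le] at hGN
  set a := Real.sqrt (m * k)
  set b := Real.sqrt (mR * kR)
  have hb : 0 < b := Real.sqrt_pos.mpr (mul_pos hmR hkR)
  have ha2 : a ^ 2 = m * k := Real.sq_sqrt (mul_pos hm hk).le
  have hb2 : b ^ 2 = mR * kR := Real.sq_sqrt (mul_pos hmR hkR).le
  have hmp : m * p ≤ 4 * (γplus / 3 * a ^ 3 / b) :=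
    calc m * p ≤ m * (pR / (b * kR) * (a * k)) := mul_le_mul_of_nonneg_left hGN hm.le
      _ = 4 * (γplus / 3 * a ^ 3 / b) := by
        rw [show pR = 4 * γplus * kR / 3 by linarith, pow_succ, ha2]
        field_simp
  apply three_mul_sq_sub_two_mul_cube_div_le hγ hb
  rw [ha2, hb2]
  linarith

/-- Abstract energy-trapping computation: from the Gagliardo–Nirenberg bound
`p ≤ C₀ √m k^{3/2}` with sharp constant `C₀ = p_R/(√m_R k_R^{3/2})`, the
mass-energy bound `m((γ₊/2)k - p/4) ≤ (1-δ) m_R (γ₊/6) k_R`, and the Pohozaev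
relation `γ₊ k_R/3 = p_R/4`, the quantity `y = √(mk)/√(m_R k_R)` satisfies
`1 - δ ≥ 3y² - 2y³`. -/
theorem stmt14 (γplus m k p mR kR pR δ : ℝ)
    (hγ : 0 < γplus) (hm : 0 < m) (hk : 0 < k) (hp : 0 < p)
    (hmR : 0 < mR) (hkR : 0 < kR) (hpR : 0 < pR)
    (hδ0 : 0 < δ) (hδ1 : δ < 1)
    (hGN : p ≤ (pR / (Real.sqrt mR * kR ^ ((3:ℝ)/2))) * Real.sqrt m * k ^ ((3:ℝ)/2))
    (hME : m * ((γplus / 2) * k - p / 4) ≤ (1 - δ) * (mR * ((γplus / 6) * kR)))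
    (hPoh : γplus * kR / 3 = pR / 4) :
    1 - δ ≥ 3 * (Real.sqrt (m * k) / Real.sqrt (mR * kR)) ^ 2
      - 2 * (Real.sqrt (m * k) / Real.sqrt (mR * kR)) ^ 3 :=
  stmt14_general γplus m k p mR kR pR δ hγ hm hk hmR hkR hGN hME hPoh
end

section
/- Let γ be 1-periodic, piecewise continuous with N discontinuities per period, bounded by M, bounded below in absolute value by c₀ > 0, and with mean ⟨γ⟩ > 0. Let 𝕀 = {t : γ(t) > 0}. Then for each n ∈ ℤ, the set Γ⁻¹([n, n+1)) ∩ 𝕀 is a union of at most K_γ := 1 + N(1 + (1 + 4M)/⟨γ⟩) intervals on each of which Γ is injective, where Γ(t) = ∫₀ᵗ γ. -/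
/-!
Two points of `Γ⁻¹([n, n+1))` are at most `L = (1 + 4M)/⟨γ⟩` apart: over `k` whole periods `Γ`
gains `k⟨γ⟩`, and over the remaining fraction of a period it loses at most `M`. So this set lies
in an interval of length `L`, which contains at most `N(L + 1)` discontinuities of `γ`. Cutting
there leaves at most `N(L + 1) + 1` pieces. Between two points of a piece `γ` is continuous and,
as `|γ| ≥ c₀`, has no zero, so it keeps the sign it has at the right point; on `{γ > 0}` it is
therefore positive in between, `Γ` is strictly increasing, and the piece is an interval.
-/

open MeasureTheory intervalIntegral Set Function

theorem card_Ioc_floor_le (x L : ℝ) : (Finset.Ioc ⌊x⌋ ⌊x + L⌋).card ≤ ⌊L⌋₊ + 1 := by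
  have := Int.le_floor_add_floor x L
  rw [Int.card_Ioc, ← Int.floor_toNat]
  omega

theorem exists_finset_fract_mem_Ioc (S : Finset ℝ) (a : ℝ) {L : ℝ} (hL : 0 ≤ L) :
    ∃ T : Finset ℝ, (T.card : ℝ) ≤ S.card * (L + 1) ∧
      ∀ d ∈ Ioc a (a + L), Int.fract d ∈ S → d ∈ T := by
  classical
  refine ⟨S.biUnion fun s => (Finset.Ioc ⌊a - s⌋ ⌊a - s + L⌋).image fun k : ℤ => s + k, ?_, ?_⟩
  · have hcard := Finset.card_biUnion_le_card_mul S
      (fun s => (Finset.Ioc ⌊a - s⌋ ⌊a - s + L⌋).image fun k : ℤ => s + k) (⌊L⌋₊ + 1) fun s _ =>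
      Finset.card_image_le.trans (card_Ioc_floor_le (a - s) L)
    calc (_ : ℝ) ≤ S.card * (⌊L⌋₊ + 1 : ℕ) := mod_cast hcard
      _ ≤ S.card * (L + 1) := by
        gcongr
        push_cast
        linarith [Nat.floor_le hL]
  · rintro d ⟨had, hdaL⟩ hd
    refine Finset.mem_biUnion.2 ⟨Int.fract d, hd, Finset.mem_image.2 ⟨⌊d⌋, ?_, Int.fract_add_floor d⟩⟩
    rw [Finset.mem_Ioc, Int.floor_lt, Int.le_floor, Int.fract]
    constructor <;> linarith

theorem exists_subset_Icc_of_forall_sub_le {A : Set ℝ} {L : ℝ}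
    (h : ∀ s ∈ A, ∀ t ∈ A, t - s ≤ L) : ∃ a, A ⊆ Icc a (a + L) := by
  rcases A.eq_empty_or_nonempty with rfl | ⟨t₀, ht₀⟩
  · exact ⟨0, empty_subset _⟩
  have hbdd : BddBelow A := ⟨t₀ - L, fun s hs => by linarith [h s hs t₀ ht₀]⟩
  refine ⟨sInf A, fun t ht => ⟨csInf_le hbdd ht, ?_⟩⟩
  have : t - L ≤ sInf A := le_csInf ⟨t₀, ht₀⟩ fun s hs => by linarith [h s hs t ht]
  linarith

/-- The piece of `ℝ` containing `c` when the line is cut just before each point of `T`. -/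
def cell (T : Finset ℝ) (c : ℝ) : Set ℝ := {t | ∀ d ∈ T, d ≤ t ↔ d ≤ c}

theorem ordConnected_cell (T : Finset ℝ) (c : ℝ) : (cell T c).OrdConnected :=
  ⟨fun _ hu _ hv _ hw d hd => ⟨fun h => (hv d hd).1 (h.trans hw.2),
    fun h => ((hu d hd).2 h).trans hw.1⟩⟩

theorem notMem_of_mem_Ioc_of_mem_cell {T : Finset ℝ} {c u v d : ℝ} (hu : u ∈ cell T c)
    (hv : v ∈ cell T c) (hd : d ∈ Ioc u v) : d ∉ T := fun hdT =>
  hd.1.not_ge <| (hu d hdT).2 <| (hv d hdT).1 hd.2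

theorem exists_finset_cell_cover (T : Finset ℝ) :
    ∃ C : Finset ℝ, C.card ≤ T.card + 1 ∧ ∀ t, ∃ c ∈ C, t ∈ cell T c := by
  classical
  obtain ⟨b, hb⟩ := T.bddBelow
  refine ⟨insert (b - 1) T, Finset.card_insert_le _ _, fun t => ?_⟩
  by_cases hF : (T.filter (· ≤ t)).Nonempty
  · obtain ⟨hcT, hct⟩ := Finset.mem_filter.1 (Finset.max'_mem _ hF)
    refine ⟨_, Finset.mem_insert_of_mem hcT, fun d hd => ⟨fun hdt => ?_, fun hdc => hdc.trans hct⟩⟩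
    exact Finset.le_max' _ d (Finset.mem_filter.2 ⟨hd, hdt⟩)
  · refine ⟨b - 1, Finset.mem_insert_self _ _, fun d hd => ⟨fun hdt => ?_, fun hdb => ?_⟩⟩
    · exact absurd ⟨d, Finset.mem_filter.2 ⟨hd, hdt⟩⟩ hF
    · linarith [hb hd]

namespace Function.Periodic

variable {γ : ℝ → ℝ} (hper : Periodic γ 1)
include hper

theorem continuousAt_iff_fract (t : ℝ) :
    ContinuousAt γ t ↔ ContinuousAt γ (Int.fract t) := by
  have hshift : γ ∘ (· + (⌊t⌋ : ℝ)) = γ := funext fun x => by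
    simpa using (hper.int_mul ⌊t⌋) x
  have := (Homeomorph.addRight (⌊t⌋ : ℝ)).comp_continuousAt_iff' γ (Int.fract t)
  rw [Homeomorph.coe_addRight, hshift] at this
  simpa only [Int.fract_add_floor] using this.symm

theorem exists_finset_not_continuousAt {S : Finset ℝ}
    (hS : ∀ t ∈ Ico (0:ℝ) 1, ¬ContinuousAt γ t → t ∈ S) (a : ℝ) {L : ℝ} (hL : 0 ≤ L) :
    ∃ T : Finset ℝ, (T.card : ℝ) ≤ S.card * (L + 1) ∧
      ∀ d ∈ Ioc a (a + L), ¬ContinuousAt γ d → d ∈ T := by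
  obtain ⟨T, hTcard, hT⟩ := exists_finset_fract_mem_Ioc S a hL
  refine ⟨T, hTcard, fun d hd hdisc => hT d hd (hS _ ⟨Int.fract_nonneg d, Int.fract_lt_one d⟩ ?_)⟩
  rwa [← hper.continuousAt_iff_fract]

variable (hint : ∀ a b, IntervalIntegrable γ volume a b) {M : ℝ} (hM : ∀ t, |γ t| ≤ M)
  (hI : 0 < ∫ x in (0:ℝ)..1, γ x)
include hint hM hI

theorem sub_lt_of_intervalIntegral_lt_one {s t : ℝ} (h : ∫ x in s..t, γ x < 1) :
    t - s < (1 + M) / (∫ x in (0:ℝ)..1, γ x) + 1 := by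
  set I := ∫ x in (0:ℝ)..1, γ x
  set k := ⌊t - s⌋
  have hk : ∫ x in s..s + k, γ x = k * I := by
    simpa [I, hper.intervalIntegral_add_eq s 0] using hper.intervalIntegral_add_zsmul_eq k s hint
  have hrest : -M ≤ ∫ x in s + k..t, γ x := by
    have hlen : |t - (s + k)| ≤ 1 := by
      rw [abs_of_nonneg (by linarith [Int.floor_le (t - s)])]
      linarith [Int.lt_floor_add_one (t - s)]
    have := norm_integral_le_of_norm_le_const (a := s + k) (b := t) fun x _ =>
      (Real.norm_eq_abs _).trans_le (hM x)
    rw [Real.norm_eq_abs] at this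
    linarith [neg_abs_le (∫ x in s + k..t, γ x),
      mul_le_of_le_one_right ((abs_nonneg _).trans (hM 0)) hlen]
  have hkI : k * I < 1 + M := by
    rw [← integral_add_adjacent_intervals (hint s (s + k)) (hint _ t), hk] at h
    linarith
  have : (k : ℝ) < (1 + M) / I := by rwa [lt_div_iff₀ hI]
  linarith [Int.lt_floor_add_one (t - s)]

theorem sub_le_of_primitive_mem_Ico {y s t : ℝ} (hs : ∫ x in (0:ℝ)..s, γ x ∈ Ico y (y + 1))
    (ht : ∫ x in (0:ℝ)..t, γ x ∈ Ico y (y + 1)) :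
    t - s ≤ (1 + 4 * M) / ∫ x in (0:ℝ)..1, γ x := by
  have hIM : ∫ x in (0:ℝ)..1, γ x ≤ M := by
    have := norm_integral_le_of_norm_le_const (a := 0) (b := 1) fun x _ =>
      (Real.norm_eq_abs _).trans_le (hM x)
    simp only [Real.norm_eq_abs, sub_zero, abs_one, mul_one] at this
    exact (le_abs_self _).trans this
  have hst : ∫ x in s..t, γ x < 1 := by
    rw [← integral_interval_sub_left (hint 0 t) (hint 0 s)]
    linarith [hs.1, ht.2]
  calc t - s ≤ (1 + M) / (∫ x in (0:ℝ)..1, γ x) + 1 :=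
        (hper.sub_lt_of_intervalIntegral_lt_one hint hM hI hst).le
    _ ≤ _ := by
      rw [div_add_one hI.ne', div_le_div_iff_of_pos_right hI]
      linarith

end Function.Periodic

section Primitive

variable {γ : ℝ → ℝ}

theorem pos_of_mem_Ioc_of_continuousAt (hne : ∀ t, γ t ≠ 0) {u v : ℝ}
    (hcont : ∀ x ∈ Ioc u v, ContinuousAt γ x) (hv : 0 < γ v) {x : ℝ} (hx : x ∈ Ioc u v) :
    0 < γ x := by
  by_contra! hx0
  have hxv : x < v := hx.2.lt_of_ne (by rintro rfl; linarith)
  obtain ⟨z, -, hz⟩ := intermediate_value_Icc hxv.le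
    (fun y hy => (hcont y ⟨hx.1.trans_le hy.1, hy.2⟩).continuousWithinAt) ⟨hx0, hv.le⟩
  exact hne z hz

variable (hint : ∀ a b, IntervalIntegrable γ volume a b) (hne : ∀ t, γ t ≠ 0) {P : Set ℝ}
  (hcont : ∀ u ∈ P, ∀ v ∈ P, ∀ x ∈ Ioc u v, ContinuousAt γ x)
include hint hne hcont

theorem strictMonoOn_primitive_inter_pos :
    StrictMonoOn (fun t => ∫ x in (0:ℝ)..t, γ x) (P ∩ {t | 0 < γ t}) := by
  intro u hu v hv huv
  have := intervalIntegral_pos_of_pos_on (hint u v)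
    (fun x hx => pos_of_mem_Ioc_of_continuousAt hne (hcont u hu.1 v hv.1) hv.2
      (Ioo_subset_Ioc_self hx)) huv
  rwa [← integral_interval_sub_left (hint 0 v) (hint 0 u), sub_pos] at this

theorem ordConnected_primitive_preimage_inter_pos_inter (hP : P.OrdConnected) {J : Set ℝ}
    (hJ : J.OrdConnected) :
    ((fun t => ∫ x in (0:ℝ)..t, γ x) ⁻¹' J ∩ {t | 0 < γ t} ∩ P).OrdConnected := by
  refine ordConnected_of_Ioo fun u hu v hv _ w hw => ?_
  have hwpos : 0 < γ w :=
    pos_of_mem_Ioc_of_continuousAt hne (hcont u hu.2 v hv.2) hv.1.2 (Ioo_subset_Ioc_self hw)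
  have hwP : w ∈ P := hP.out hu.2 hv.2 (Ioo_subset_Icc_self hw)
  have hmono := strictMonoOn_primitive_inter_pos hint hne hcont
  exact ⟨⟨hJ.out hu.1.1 hv.1.1 ⟨(hmono ⟨hu.2, hu.1.2⟩ ⟨hwP, hwpos⟩ hw.1).le,
    (hmono ⟨hwP, hwpos⟩ ⟨hv.2, hv.1.2⟩ hw.2).le⟩, hwpos⟩, hwP⟩

end Primitive

/-- Covering-number bound (2.5): for `γ` 1-periodic with exactly `N` discontinuities
per period, `0 < c₀ ≤ |γ| ≤ M`, and mean `⟨γ⟩ > 0`, for each `n ∈ ℤ` the set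
`Γ⁻¹([n,n+1)) ∩ {γ > 0}` is a union of at most `K_γ = 1 + N(1 + (1+4M)/⟨γ⟩)`
intervals on each of which `Γ` is injective. -/
theorem stmt19 (γ : ℝ → ℝ) (M c₀ : ℝ) (N : ℕ)
    (hper : ∀ t : ℝ, γ (t + 1) = γ t)
    (hc₀ : 0 < c₀)
    (hbound : ∀ t : ℝ, c₀ ≤ |γ t| ∧ |γ t| ≤ M)
    (hint : ∀ a b : ℝ, IntervalIntegrable γ volume a b)
    (hdisc : ∃ S : Finset ℝ, S.card = N ∧
      ∀ t ∈ Set.Ico (0:ℝ) 1, (¬ ContinuousAt γ t ↔ t ∈ S))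
    (hmean : 0 < ∫ s in (0:ℝ)..1, γ s) :
    ∀ n : ℤ, ∃ 𝒰 : Finset (Set ℝ),
      (𝒰.card : ℝ) ≤ 1 + (N : ℝ) * (1 + (1 + 4 * M) / (∫ s in (0:ℝ)..1, γ s)) ∧
      ((fun t : ℝ => ∫ s in (0:ℝ)..t, γ s) ⁻¹' Set.Ico (n : ℝ) ((n : ℝ) + 1))
          ∩ {t : ℝ | 0 < γ t} = ⋃₀ (𝒰 : Set (Set ℝ)) ∧
      ∀ U ∈ 𝒰, U.OrdConnected ∧ Set.InjOn (fun t : ℝ => ∫ s in (0:ℝ)..t, γ s) U := by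
  intro n
  obtain ⟨S, rfl, hS⟩ := hdisc
  set L := (1 + 4 * M) / ∫ s in (0:ℝ)..1, γ s
  set A := (fun t : ℝ => ∫ s in (0:ℝ)..t, γ s) ⁻¹' Ico (n : ℝ) (n + 1) ∩ {t | 0 < γ t}
  have hne : ∀ t, γ t ≠ 0 := fun t => abs_pos.1 (hc₀.trans_le (hbound t).1)
  have hL : 0 ≤ L := div_nonneg (by linarith [(abs_nonneg _).trans (hbound 0).2]) hmean.le
  obtain ⟨a, hA⟩ : ∃ a, A ⊆ Icc a (a + L) := exists_subset_Icc_of_forall_sub_le fun s hs t ht =>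
    Periodic.sub_le_of_primitive_mem_Ico hper hint (fun t => (hbound t).2) hmean hs.1 ht.1
  obtain ⟨T, hTcard, hT⟩ :=
    Periodic.exists_finset_not_continuousAt hper (fun t ht => (hS t ht).1) a hL
  obtain ⟨C, hCcard, hC⟩ := exists_finset_cell_cover T
  have hcont : ∀ c, ∀ u ∈ Icc a (a + L) ∩ cell T c, ∀ v ∈ Icc a (a + L) ∩ cell T c,
      ∀ x ∈ Ioc u v, ContinuousAt γ x := fun c u hu v hv x hx => by
    by_contra hx_disc
    exact notMem_of_mem_Ioc_of_mem_cell hu.2 hv.2 hx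
      (hT x ⟨hu.1.1.trans_lt hx.1, hx.2.trans hv.1.2⟩ hx_disc)
  refine ⟨C.image fun c => A ∩ (Icc a (a + L) ∩ cell T c), ?_, ?_, ?_⟩
  · calc ((C.image _).card : ℝ) ≤ T.card + 1 := mod_cast Finset.card_image_le.trans hCcard
      _ ≤ _ := by linarith
  · ext t
    simp only [Finset.coe_image, sUnion_image, mem_iUnion, Finset.mem_coe, exists_prop]
    refine ⟨fun ht => ?_, fun ⟨_, _, ht, _⟩ => ht⟩
    obtain ⟨c, hc, htc⟩ := hC t
    exact ⟨c, hc, ht, hA ht, htc⟩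
  · intro U hU
    obtain ⟨c, -, rfl⟩ := Finset.mem_image.1 hU
    exact ⟨ordConnected_primitive_preimage_inter_pos_inter hint hne (hcont c)
      (ordConnected_Icc.inter (ordConnected_cell T c)) ordConnected_Ico,
      (strictMonoOn_primitive_inter_pos hint hne (hcont c)).injOn.mono
        fun _ ht => by exact ⟨ht.2, ht.1.2⟩⟩
end
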